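/- Let F : ℝ → ℝ be a continuous 1-periodic function with F > 0, and define f : ℝ² → ℝ by f(x,y) = F(y). Then the metric g = f²(dx²+dy²) on the unit square torus ℝ²/ℤ² satisfies the inequality with a second isosystolic defect term: area(g) − sys(g)² ≥ var(f) + (1/4)‖f₀‖₁², where f₀ = F − m, m = ∫₀¹ F(y) dy, and ‖f₀‖₁ = ∫₀¹ |F(y) − m| dy. -/

import Mathlib

open MeasureTheory intervalIntegral

/-- A path `γ : [0,1] → ℂ ≅ ℝ²` is piecewise `C¹` with derivative `γ'` if it is continuous
on `[0,1]` and there is a finite partition `0 = t₀ < t₁ < ⋯ < tₙ = 1` such that on each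
closed piece the derivative of `γ` extends to a continuous function agreeing with `γ'`
in the interior of the piece. -/
def IsPiecewiseC1Path (γ γ' : ℝ → ℂ) : Prop :=
  ContinuousOn γ (Set.Icc 0 1) ∧
  ∃ (n : ℕ) (t : ℕ → ℝ), 0 < n ∧ t 0 = 0 ∧ t n = 1 ∧
    (∀ i < n, t i < t (i + 1)) ∧
    ∀ i < n, ∃ d : ℝ → ℂ, ContinuousOn d (Set.Icc (t i) (t (i + 1))) ∧
      ∀ x ∈ Set.Ioo (t i) (t (i + 1)), HasDerivAt γ (d x) x ∧ γ' x = d x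

/-- The length of a path `γ` with derivative `γ'` in the conformal metric `f²(dx²+dy²)`. -/
noncomputable def gLength (f : ℂ → ℝ) (γ γ' : ℝ → ℂ) : ℝ :=
  ∫ t in (0:ℝ)..1, f (γ t) * ‖γ' t‖

/-- The systole of the metric `f²(dx²+dy²)` on the torus `ℝ²/L`: the infimum of lengths of
piecewise `C¹` paths whose endpoint difference is a nonzero lattice vector. -/
noncomputable def systole (L : Set ℂ) (f : ℂ → ℝ) : ℝ :=
  sInf { ℓ : ℝ | ∃ γ γ' : ℝ → ℂ, IsPiecewiseC1Path γ γ' ∧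
    γ 1 - γ 0 ∈ L ∧ γ 1 - γ 0 ≠ 0 ∧ ℓ = gLength f γ γ' }

/-!
The horizontal loop at the height `y₀` where `F` is smallest has length `F y₀`, so
`sys ≤ F y₀`, while `area − var = m²`. Since `F ≥ F y₀`, `|F − m| ≤ (F − F y₀) + (m − F y₀)`,
hence `‖f₀‖₁ ≤ 2(m − F y₀)`, i.e. `sys ≤ m − ‖f₀‖₁/2`, and
`m² − (m − ‖f₀‖₁/2)² ≥ ‖f₀‖₁²/4` because `‖f₀‖₁ ≤ 2m`.
-/

section Systole

variable {L : Set ℂ} {f : ℂ → ℝ}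

theorem isPiecewiseC1Path_affine (z v : ℂ) :
    IsPiecewiseC1Path (fun t : ℝ => z + t * v) (fun _ => v) := by
  refine ⟨by fun_prop, 1, fun i => i, one_pos, by simp, by simp, fun i _ => by simp, ?_⟩
  intro i _
  refine ⟨fun _ => v, continuousOn_const, fun t _ => ⟨?_, rfl⟩⟩
  simpa using ((hasDerivAt_id t).ofReal_comp.mul_const v).const_add z

theorem gLength_nonneg (hf : ∀ z, 0 ≤ f z) (γ γ' : ℝ → ℂ) : 0 ≤ gLength f γ γ' :=
  intervalIntegral.integral_nonneg zero_le_one fun _ _ => mul_nonneg (hf _) (norm_nonneg _)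

theorem systole_nonneg (hf : ∀ z, 0 ≤ f z) : 0 ≤ systole L f :=
  Real.sInf_nonneg <| by
    rintro ℓ ⟨γ, γ', -, -, -, rfl⟩
    exact gLength_nonneg hf γ γ'

theorem systole_le_gLength (hf : ∀ z, 0 ≤ f z) {γ γ' : ℝ → ℂ} (hγ : IsPiecewiseC1Path γ γ')
    (hL : γ 1 - γ 0 ∈ L) (hne : γ 1 - γ 0 ≠ 0) : systole L f ≤ gLength f γ γ' :=
  csInf_le ⟨0, by rintro ℓ ⟨γ, γ', -, -, -, rfl⟩; exact gLength_nonneg hf γ γ'⟩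
    ⟨γ, γ', hγ, hL, hne, rfl⟩

theorem systole_le_integral_horizontal (hf : ∀ z, 0 ≤ f z) (hL : (1 : ℂ) ∈ L) (z : ℂ) :
    systole L f ≤ ∫ t in (0:ℝ)..1, f (z + t) := by
  simpa [gLength] using
    systole_le_gLength (L := L) hf (isPiecewiseC1Path_affine z 1) (by simpa using hL) (by simp)

end Systole

section MeanDeviation

variable {F : ℝ → ℝ}

theorem integral_sub_integral_sq (hF : IntervalIntegrable F volume 0 1)
    (hF2 : IntervalIntegrable (fun y => F y ^ 2) volume 0 1) :
    ∫ y in (0:ℝ)..1, (F y - ∫ y in (0:ℝ)..1, F y) ^ 2 =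
      (∫ y in (0:ℝ)..1, F y ^ 2) - (∫ y in (0:ℝ)..1, F y) ^ 2 := by
  set m := ∫ y in (0:ℝ)..1, F y
  have hexp : ∀ y, (F y - m) ^ 2 = (F y ^ 2 - 2 * m * F y) + m ^ 2 := fun y => by ring
  simp_rw [hexp]
  rw [intervalIntegral.integral_add (hF2.sub (hF.const_mul _)) intervalIntegrable_const,
    intervalIntegral.integral_sub hF2 (hF.const_mul _), intervalIntegral.integral_const_mul]
  simp only [intervalIntegral.integral_const, smul_eq_mul, sub_zero, one_mul]
  ring

theorem integral_abs_sub_integral_le (hF : IntervalIntegrable F volume 0 1) {c : ℝ}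
    (hc : ∀ y ∈ Set.Icc (0:ℝ) 1, c ≤ F y) :
    ∫ y in (0:ℝ)..1, |F y - ∫ y in (0:ℝ)..1, F y| ≤ 2 * ((∫ y in (0:ℝ)..1, F y) - c) := by
  set m := ∫ y in (0:ℝ)..1, F y
  have hcm : c ≤ m := by
    simpa using intervalIntegral.integral_mono_on zero_le_one intervalIntegrable_const hF hc
  have hpt : ∀ y ∈ Set.Icc (0:ℝ) 1, |F y - m| ≤ F y + (m - 2 * c) := fun y hy => by
    have := hc y hy
    rw [abs_le]; constructor <;> linarith
  have := intervalIntegral.integral_mono_on zero_le_one (hF.sub intervalIntegrable_const).abs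
    (hF.add intervalIntegrable_const) hpt
  rw [intervalIntegral.integral_add hF intervalIntegrable_const] at this
  simp only [intervalIntegral.integral_const, smul_eq_mul, sub_zero, one_mul] at this
  linarith

end MeanDeviation

theorem loewner_one_variable_second_defect_general
    (F : ℝ → ℝ) (hF : Continuous F)
    (hFpos : ∀ y, 0 < F y)
    (f : ℂ → ℝ) (hfdef : ∀ z : ℂ, f z = F z.im)
    (L : Set ℂ) (hL : L = {z : ℂ | ∃ m n : ℤ, z = (m : ℂ) + (n : ℂ) * Complex.I})
    (area m var l1 : ℝ)
    (hm : m = ∫ y in (0:ℝ)..1, F y)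
    (harea : area = ∫ x in (0:ℝ)..1, ∫ y in (0:ℝ)..1,
      (f ((x : ℂ) + (y : ℂ) * Complex.I)) ^ 2)
    (hvar : var = ∫ x in (0:ℝ)..1, ∫ y in (0:ℝ)..1,
      (f ((x : ℂ) + (y : ℂ) * Complex.I) - m) ^ 2)
    (hl1 : l1 = ∫ y in (0:ℝ)..1, |F y - m|) :
    area - systole L f ^ 2 ≥ var + (1 / 4) * l1 ^ 2 := by
  obtain ⟨y₀, -, hmin⟩ :=
    isCompact_Icc.exists_isMinOn (Set.nonempty_Icc.2 zero_le_one) hF.continuousOn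
  have hf : ∀ z, 0 ≤ f z := fun z => hfdef z ▸ (hFpos _).le
  have hsys : systole L f ≤ F y₀ := by
    have h1 : (1 : ℂ) ∈ L := hL ▸ ⟨1, 0, by simp⟩
    simpa [hfdef] using systole_le_integral_horizontal hf h1 (y₀ * Complex.I)
  have hsys₀ : 0 ≤ systole L f := systole_nonneg hf
  have hav : area - var = m ^ 2 := by
    have := integral_sub_integral_sq (hF.intervalIntegrable 0 1) ((hF.pow 2).intervalIntegrable 0 1)
    simp only [harea, hvar, hfdef, hm, Complex.add_im, Complex.ofReal_im, Complex.mul_im,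
      Complex.ofReal_re, Complex.I_re, Complex.I_im, intervalIntegral.integral_const, sub_zero,
      mul_one, mul_zero, add_zero, zero_add, smul_eq_mul, one_mul]
    linarith
  have hl1le : l1 ≤ 2 * (m - F y₀) := hl1 ▸ hm ▸
    integral_abs_sub_integral_le (hF.intervalIntegrable 0 1) fun y hy => hmin hy
  have hl1₀ : 0 ≤ l1 := hl1 ▸ intervalIntegral.integral_nonneg zero_le_one fun _ _ => abs_nonneg _
  nlinarith [mul_self_le_mul_self hsys₀ hsys, hFpos y₀]

/-- **One-variable conformal factor: Loewner's inequality with a second defect term.**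
On the unit square torus `ℝ²/ℤ²`, if the conformal factor `f(x,y) = F(y)` depends only on
one variable, then `area(g) − sys(g)² ≥ var(f) + ¼‖f₀‖₁²`, where `f₀ = F − m`. -/
theorem loewner_one_variable_second_defect
    (F : ℝ → ℝ) (hF : Continuous F) (hFper : ∀ y : ℝ, F (y + 1) = F y)
    (hFpos : ∀ y, 0 < F y)
    (f : ℂ → ℝ) (hfdef : ∀ z : ℂ, f z = F z.im)
    (L : Set ℂ) (hL : L = {z : ℂ | ∃ m n : ℤ, z = (m : ℂ) + (n : ℂ) * Complex.I})
    (area m var l1 : ℝ)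
    (hm : m = ∫ y in (0:ℝ)..1, F y)
    (harea : area = ∫ x in (0:ℝ)..1, ∫ y in (0:ℝ)..1,
      (f ((x : ℂ) + (y : ℂ) * Complex.I)) ^ 2)
    (hvar : var = ∫ x in (0:ℝ)..1, ∫ y in (0:ℝ)..1,
      (f ((x : ℂ) + (y : ℂ) * Complex.I) - m) ^ 2)
    (hl1 : l1 = ∫ y in (0:ℝ)..1, |F y - m|) :
    area - systole L f ^ 2 ≥ var + (1 / 4) * l1 ^ 2 :=
  loewner_one_variable_second_defect_general F hF hFpos f hfdef L hL area m var l1 hm harea hvar hl1
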